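/- Let G=(V,E) be an undirected unweighted graph, p* an s–t path in G with edge sequence e1,…,eℓ, and let Ĝ be the augmented line graph of G with respect to s and t, with target path p̂* = (ŝ, e1, …, eℓ, t̂). If V̂' ⊆ E∖{e1,…,eℓ} (viewed as a set of vertices of Ĝ) is a Force Path Remove solution for (Ĝ, p̂*), then V̂', viewed as an edge set E' ⊆ E, is a Force Path Cut solution for (G, p*). -/

import Mathlib

/-- `E'` is a Force Path Cut solution for the undirected graph `G` with unit edge
weights and target path `p`. -/
def FPCSol {V : Type*} (G : SimpleGraph V) {s t : V} (p : G.Walk s t)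
    (E' : Set (Sym2 V)) : Prop :=
  E' ⊆ G.edgeSet ∧ (∀ e ∈ p.edges, e ∉ E') ∧
    ∀ q : (G.deleteEdges E').Walk s t, q.IsPath →
      q.mapLe (SimpleGraph.deleteEdges_le E') ≠ p → p.length < q.length

/-- `V'` is a Force Path Remove solution for the unweighted graph `H` and target path
`p`: `V'` avoids the vertices of `p`, and in the subgraph induced on the complement of
`V'` (modelled by deleting every edge incident to a vertex of `V'`) the path `p` is
strictly shorter than every other path between its endpoints. -/
def FPRSol {X : Type*} (H : SimpleGraph X) {a b : X} (p : H.Walk a b)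
    (V' : Set X) : Prop :=
  (∀ v ∈ V', v ∉ p.support) ∧
    ∀ q : (H.deleteEdges {e : Sym2 X | ∃ v ∈ V', v ∈ e}).Walk a b, q.IsPath →
      q.mapLe (SimpleGraph.deleteEdges_le _) ≠ p → p.length < q.length

/-- The adjacency relation of the augmented line graph of `G` with respect to `s` and
`t`.  Its vertices are the edges of `G` (as elements of `Sym2 V`) together with two new
vertices `ŝ = Sum.inr false` and `t̂ = Sum.inr true`; two edges of `G` are adjacent iff
they are distinct and share an endpoint, `ŝ` is adjacent to exactly the edges incident
to `s`, and `t̂` to exactly the edges incident to `t`. -/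
def lgAdj {V : Type*} (G : SimpleGraph V) (s t : V) :
    (Sym2 V ⊕ Bool) → (Sym2 V ⊕ Bool) → Prop
  | Sum.inl e, Sum.inl f => e ∈ G.edgeSet ∧ f ∈ G.edgeSet ∧ e ≠ f ∧ ∃ v, v ∈ e ∧ v ∈ f
  | Sum.inl e, Sum.inr b => e ∈ G.edgeSet ∧ (if b then t else s) ∈ e
  | Sum.inr b, Sum.inl e => e ∈ G.edgeSet ∧ (if b then t else s) ∈ e
  | Sum.inr _, Sum.inr _ => False

/-- The augmented line graph of `G` with respect to `s` and `t`. -/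
def lineGraph {V : Type*} (G : SimpleGraph V) (s t : V) :
    SimpleGraph (Sym2 V ⊕ Bool) where
  Adj := lgAdj G s t
  symm := by
    constructor
    rintro (e | b) (f | b') h <;> simp only [lgAdj] at h ⊢ <;> tauto
  loopless := by
    constructor
    rintro (e | b) h <;> simp only [lgAdj] at h
    exact h.2.2.1 rfl

/-!
A path `q` from `s` to `t` in `G` minus the edges of `V̂'` lifts to the walk
`(ŝ, e₁(q), …, e_k(q), t̂)` of `Ĝ`, which is a path (the edges of `q` are distinct),
avoids `V̂'`, has length `|q| + 1`, and differs from `p̂*` unless `q = p*`.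
So the Force Path Remove inequality `|p̂*| < |q| + 1` for the lift is exactly the
Force Path Cut inequality `|p*| < |q|`.
-/

open SimpleGraph hiding lineGraph

section

variable {V : Type*} {H : SimpleGraph V} {s t : V}

theorem SimpleGraph.deleteEdges_incident_adj {X : Type*} {G : SimpleGraph X} {S : Set X}
    {x y : X} : (G.deleteEdges {d | ∃ v ∈ S, v ∈ d}).Adj x y ↔ G.Adj x y ∧ x ∉ S ∧ y ∉ S := by
  simp only [deleteEdges_adj, Set.mem_ofPred_eq, Sym2.mem_iff]
  grind

@[simp]
theorem lineGraph_adj_inl_inl {e f : Sym2 V} :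
    (lineGraph H s t).Adj (Sum.inl e) (Sum.inl f) ↔
      e ∈ H.edgeSet ∧ f ∈ H.edgeSet ∧ e ≠ f ∧ ∃ v, v ∈ e ∧ v ∈ f :=
  Iff.rfl

@[simp]
theorem lineGraph_adj_inl_inr {e : Sym2 V} {b : Bool} :
    (lineGraph H s t).Adj (Sum.inl e) (Sum.inr b) ↔ e ∈ H.edgeSet ∧ (if b then t else s) ∈ e :=
  Iff.rfl

@[simp]
theorem lineGraph_adj_inr_inl {e : Sym2 V} {b : Bool} :
    (lineGraph H s t).Adj (Sum.inr b) (Sum.inl e) ↔ e ∈ H.edgeSet ∧ (if b then t else s) ∈ e :=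
  Iff.rfl

@[simp]
theorem lineGraph_not_adj_inr_inr {a b : Bool} : ¬(lineGraph H s t).Adj (Sum.inr a) (Sum.inr b) :=
  id

theorem SimpleGraph.Walk.length_eq_of_support_eq_cons_append {u v x y : V} (w : H.Walk u v)
    {l : List V} (h : w.support = x :: (l ++ [y])) : w.length = l.length + 1 := by
  have := w.length_support
  rw [h] at this
  simp only [List.length_cons, List.length_append, List.length_nil] at this
  omega

theorem lineGraph_deleteEdges_le {V' : Set (Sym2 V ⊕ Bool)} (hV' : ∀ b, Sum.inr b ∉ V') :
    lineGraph (H.deleteEdges {e | Sum.inl e ∈ V'}) s t ≤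
      (lineGraph H s t).deleteEdges {d | ∃ v ∈ V', v ∈ d} := by
  intro x y hadj
  rw [deleteEdges_incident_adj]
  rcases x with e | a <;> rcases y with f | b <;>
    simp only [lineGraph_adj_inl_inl, lineGraph_adj_inl_inr, lineGraph_adj_inr_inl,
      lineGraph_not_adj_inr_inr, edgeSet_deleteEdges, Set.mem_sdiff, Set.mem_ofPred_eq]
      at hadj ⊢ <;>
    tauto

theorem exists_lineGraph_walk_of_isTrail_of_mem {x : V} {q : H.Walk x t} (hq : q.IsTrail)
    {e : Sym2 V} (he : e ∈ H.edgeSet) (hxe : x ∈ e) (heq : e ∉ q.edges) :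
    ∃ w : (lineGraph H s t).Walk (Sum.inl e) (Sum.inr true),
      w.support = Sum.inl e :: (q.edges.map Sum.inl ++ [Sum.inr true]) := by
  induction q generalizing e with
  | nil => exact ⟨.cons (lineGraph_adj_inl_inr.mpr ⟨he, by simpa⟩) .nil, rfl⟩
  | @cons x y u h q ih =>
    rw [Walk.isTrail_cons] at hq
    obtain ⟨w, hw⟩ := ih hq.1 h (Sym2.mem_mk_right x y) hq.2
    have hadj : (lineGraph H s u).Adj (Sum.inl e) (Sum.inl s(x, y)) :=
      lineGraph_adj_inl_inl.mpr
        ⟨he, h, fun hef => heq (by simp [hef]), x, hxe, Sym2.mem_mk_left x y⟩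
    exact ⟨.cons hadj w, by simp [hw]⟩

theorem exists_lineGraph_walk_of_isTrail {q : H.Walk s t} (hq : q.IsTrail) (hst : s ≠ t) :
    ∃ w : (lineGraph H s t).Walk (Sum.inr false) (Sum.inr true),
      w.support = Sum.inr false :: (q.edges.map Sum.inl ++ [Sum.inr true]) := by
  cases q with
  | nil => exact absurd rfl hst
  | cons h q =>
    rw [Walk.isTrail_cons] at hq
    obtain ⟨w, hw⟩ :=
      exists_lineGraph_walk_of_isTrail_of_mem (s := s) hq.1 h (Sym2.mem_mk_right _ _) hq.2
    exact ⟨.cons (lineGraph_adj_inr_inl.mpr ⟨h, by simp⟩) w, by simp [hw]⟩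

end

theorem stmt14_general {V : Type*} (G : SimpleGraph V) (s t : V) (hst : s ≠ t)
    (pstar : G.Walk s t)
    (phat : (lineGraph G s t).Walk (Sum.inr false) (Sum.inr true))
    (hphat : phat.support
        = Sum.inr false :: (pstar.edges.map Sum.inl ++ [Sum.inr true]))
    (Vhat' : Set (Sym2 V ⊕ Bool))
    (hsub : Vhat' ⊆ Sum.inl '' {e : Sym2 V | e ∈ G.edgeSet ∧ e ∉ pstar.edges})
    (hsol : FPRSol (lineGraph G s t) phat Vhat') :
    FPCSol G pstar {e : Sym2 V | Sum.inl e ∈ Vhat'} := by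
  have hinr : ∀ b, Sum.inr b ∉ Vhat' := fun b hb => by
    obtain ⟨_, _, h⟩ := hsub hb
    cases h
  refine ⟨fun e he => ?_, fun e hep he => ?_, fun q hq hne => ?_⟩
  · obtain ⟨_, ⟨hE, _⟩, h⟩ := hsub he
    exact Sum.inl_injective h ▸ hE
  · obtain ⟨_, ⟨_, hnp⟩, h⟩ := hsub he
    exact hnp (Sum.inl_injective h ▸ hep)
  obtain ⟨w, hw⟩ := exists_lineGraph_walk_of_isTrail hq.isTrail hst
  set w' := w.mapLe (lineGraph_deleteEdges_le hinr)
  have hw' : w'.support = Sum.inr false :: (q.edges.map Sum.inl ++ [Sum.inr true]) :=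
    (w.support_mapLe_eq_support _).trans hw
  have hpath : w'.IsPath := by
    rw [Walk.isPath_def, hw']
    simpa [List.nodup_append, List.nodup_map_iff Sum.inl_injective] using hq.edges_nodup
  have hne' : w'.mapLe (deleteEdges_le _) ≠ phat := by
    intro h
    apply hne
    apply Walk.edges_injective
    have := congrArg Walk.support h
    rw [Walk.support_mapLe_eq_support, hw', hphat] at this
    simpa [List.map_injective_iff.mpr Sum.inl_injective |>.eq_iff] using this
  have hlt := hsol.2 w' hpath hne'
  rw [Walk.length_eq_of_support_eq_cons_append _ hphat,
    Walk.length_eq_of_support_eq_cons_append _ hw'] at hlt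
  simpa using hlt

/-- If `V̂' ⊆ E ∖ {e1, …, eℓ}` (viewed as vertices of the augmented
line graph `Ĝ`) is a Force Path Remove solution for `(Ĝ, p̂*)`, where
`p̂* = (ŝ, e1, …, eℓ, t̂)` corresponds to the edge sequence of `p*`, then `V̂'` viewed
as an edge set of `G` is a Force Path Cut solution for `(G, p*)`. -/
theorem stmt14 {V : Type*} (G : SimpleGraph V) (s t : V) (hst : s ≠ t)
    (pstar : G.Walk s t) (hpstar : pstar.IsPath)
    (phat : (lineGraph G s t).Walk (Sum.inr false) (Sum.inr true))
    (hphat : phat.support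
        = Sum.inr false :: (pstar.edges.map Sum.inl ++ [Sum.inr true]))
    (Vhat' : Set (Sym2 V ⊕ Bool))
    (hsub : Vhat' ⊆ Sum.inl '' {e : Sym2 V | e ∈ G.edgeSet ∧ e ∉ pstar.edges})
    (hsol : FPRSol (lineGraph G s t) phat Vhat') :
    FPCSol G pstar {e : Sym2 V | Sum.inl e ∈ Vhat'} :=
  stmt14_general G s t hst pstar phat hphat Vhat' hsub hsol
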